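/- arXiv:1612.05300 — 5 statements merged into one kernel-verified Lean document; each statement's English description precedes it below -/
import Mathlib

section
/- Let n ≥ 1 be a natural number, let β = (2n−1)π/2, and let ν = 1/β² = 4/((2n−1)²π²). If v : ℝ → ℝ is four times continuously differentiable on [−1,1], satisfies v''(x) + ν·v''''(x) = 0 for all x ∈ [−1,1], and satisfies v(−1) = v(1) = 0 and v''(−1) = v''(1) = 0, then there exists c ∈ ℝ such that v(x) = c·cos(βx) for all x ∈ [−1,1]. In particular, the kernel of the linearization at this parameter value, subject to Dirichlet boundary conditions, is one-dimensional and spanned by cos((2n−1)πx/2). -/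
/-!
Writing `w = v''`, the equation says `w'' = -β² w`. Since `w(-1) = 0`, the harmonic-oscillator
solution through `-1` is `w(x) = w'(-1) sin(β(x+1)) / β`, and `cos β = 0` turns this into a multiple
`K cos(βx)`. Then `v + (K/β²) cos(βx)` has vanishing second derivative, so it is affine, and it
vanishes at `±1` because `v` and `cos(βx)` do; hence it vanishes identically.
-/

open Set Real

theorem ContDiffOn.hasDerivWithinAt_iteratedDerivWithin {𝕜 F : Type*} [NontriviallyNormedField 𝕜]
    [NormedAddCommGroup F] [NormedSpace 𝕜 F] {n : WithTop ℕ∞} {k : ℕ} {f : 𝕜 → F} {s : Set 𝕜}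
    (hf : ContDiffOn 𝕜 n f s) (hk : k < n) (hs : UniqueDiffOn 𝕜 s) {x : 𝕜} (hx : x ∈ s) :
    HasDerivWithinAt (iteratedDerivWithin k f s) (iteratedDerivWithin (k + 1) f s x) s x := by
  rw [iteratedDerivWithin_succ]
  exact (hf.differentiableOn_iteratedDerivWithin hk hs x hx).hasDerivWithinAt

namespace Convex

variable {s : Set ℝ}

theorem is_const_of_hasDerivWithinAt_zero {E : Type*} [NormedAddCommGroup E] [NormedSpace ℝ E]
    {f : ℝ → E} (hs : Convex ℝ s) (hf : ∀ x ∈ s, HasDerivWithinAt f 0 s x) {x y : ℝ}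
    (hx : x ∈ s) (hy : y ∈ s) : f x = f y := by
  have := hs.norm_image_sub_le_of_norm_hasDerivWithin_le hf (fun _ _ ↦ norm_zero.le) hx hy
  simpa [sub_eq_zero, eq_comm] using this

theorem mul_eq_cos_add_sin_of_oscillator (hs : Convex ℝ s) {f f' : ℝ → ℝ} (β : ℝ)
    (hf : ∀ x ∈ s, HasDerivWithinAt f (f' x) s x)
    (hf' : ∀ x ∈ s, HasDerivWithinAt f' (-β ^ 2 * f x) s x) {x₀ x : ℝ} (hx₀ : x₀ ∈ s)
    (hx : x ∈ s) :
    β * f x = β * f x₀ * cos (β * (x - x₀)) + f' x₀ * sin (β * (x - x₀)) := by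
  -- the phase-space point `(β f, f')` rotated back by the angle `β y` is a first integral
  have ha : ∀ y ∈ s, HasDerivWithinAt
      (fun y ↦ β * f y * cos (β * y) - f' y * sin (β * y)) 0 s y := fun y hy ↦
    ((((hf y hy).const_mul β).mul (hasDerivAt_const_mul β).cos.hasDerivWithinAt).sub
      ((hf' y hy).mul (hasDerivAt_const_mul β).sin.hasDerivWithinAt)).congr_deriv (by ring)
  have hb : ∀ y ∈ s, HasDerivWithinAt
      (fun y ↦ β * f y * sin (β * y) + f' y * cos (β * y)) 0 s y := fun y hy ↦
    ((((hf y hy).const_mul β).mul (hasDerivAt_const_mul β).sin.hasDerivWithinAt).add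
      ((hf' y hy).mul (hasDerivAt_const_mul β).cos.hasDerivWithinAt)).congr_deriv (by ring)
  have ea := hs.is_const_of_hasDerivWithinAt_zero ha hx hx₀
  have eb := hs.is_const_of_hasDerivWithinAt_zero hb hx hx₀
  rw [mul_sub, cos_sub, sin_sub]
  linear_combination cos (β * x) * ea + sin (β * x) * eb - β * f x * sin_sq_add_cos_sq (β * x)

theorem exists_eq_mul_cos_of_oscillator (hs : Convex ℝ s) {f f' : ℝ → ℝ} {β x₀ : ℝ} (hβ : β ≠ 0)
    (hf : ∀ x ∈ s, HasDerivWithinAt f (f' x) s x)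
    (hf' : ∀ x ∈ s, HasDerivWithinAt f' (-β ^ 2 * f x) s x) (hx₀ : x₀ ∈ s) (hfx₀ : f x₀ = 0)
    (hcos : cos (β * x₀) = 0) : ∃ K, ∀ x ∈ s, f x = K * cos (β * x) := by
  refine ⟨-(f' x₀ * sin (β * x₀) / β), fun x hx ↦ ?_⟩
  have := hs.mul_eq_cos_add_sin_of_oscillator β hf hf' hx₀ hx
  rw [hfx₀, mul_sub, sin_sub, hcos] at this
  field_simp
  linear_combination this

end Convex

theorem eq_zero_on_Icc_of_second_deriv_zero {a b : ℝ} {f f' : ℝ → ℝ}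
    (hf : ∀ x ∈ Icc a b, HasDerivWithinAt f (f' x) (Icc a b) x)
    (hf' : ∀ x ∈ Icc a b, HasDerivWithinAt f' 0 (Icc a b) x) (ha : f a = 0) (hb : f b = 0) :
    ∀ x ∈ Icc a b, f x = 0 := by
  intro x hx
  have hax : a ∈ Icc a b := left_mem_Icc.2 (hx.1.trans hx.2)
  have hbx : b ∈ Icc a b := right_mem_Icc.2 (hx.1.trans hx.2)
  have hg : ∀ z ∈ Icc a b, HasDerivWithinAt (fun z ↦ f z - f' a * z) 0 (Icc a b) z := by
    intro z hz
    refine ((hf z hz).sub ((hasDerivWithinAt_id z _).const_mul (f' a))).congr_deriv ?_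
    rw [(convex_Icc a b).is_const_of_hasDerivWithinAt_zero hf' hz hax]
    ring
  have hslope : ∀ y ∈ Icc a b, f y = f' a * (y - a) := fun y hy ↦ by
    linear_combination (convex_Icc a b).is_const_of_hasDerivWithinAt_zero hg hy hax + ha
  have hb' := hslope b hbx
  rw [hb, eq_comm, mul_eq_zero] at hb'
  rw [hslope x hx]
  rcases hb' with hc | hba
  · simp [hc]
  · simp [show x - a = 0 by linarith [hx.1, hx.2]]

theorem eq_mul_cos_of_second_deriv_eq_mul_cos {a b β K : ℝ} {f f' : ℝ → ℝ} (hβ : β ≠ 0)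
    (hf : ∀ x ∈ Icc a b, HasDerivWithinAt f (f' x) (Icc a b) x)
    (hf' : ∀ x ∈ Icc a b, HasDerivWithinAt f' (K * cos (β * x)) (Icc a b) x)
    (ha : f a = 0) (hb : f b = 0) (hcosa : cos (β * a) = 0) (hcosb : cos (β * b) = 0) :
    ∀ x ∈ Icc a b, f x = -(K / β ^ 2) * cos (β * x) := by
  intro x hx
  have hu := eq_zero_on_Icc_of_second_deriv_zero (f := fun x ↦ f x + K / β ^ 2 * cos (β * x))
    (f' := fun x ↦ f' x - K / β * sin (β * x))
    (fun x hx ↦ ((hf x hx).add ((hasDerivAt_const_mul β).cos.hasDerivWithinAt.const_mul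
      (K / β ^ 2))).congr_deriv (by field_simp; ring))
    (fun x hx ↦ ((hf' x hx).sub ((hasDerivAt_const_mul β).sin.hasDerivWithinAt.const_mul
      (K / β))).congr_deriv (by field_simp; ring))
    (by simp [ha, hcosa]) (by simp [hb, hcosb]) x hx
  linear_combination hu

theorem dirichlet_kernel_cos_general (n : ℕ) (β ν : ℝ)
    (hβ : β = (2 * (n : ℝ) - 1) * Real.pi / 2)
    (hν : ν = 1 / β ^ 2)
    (v : ℝ → ℝ)
    (hsmooth : ContDiffOn ℝ 4 v (Icc (-1 : ℝ) 1))
    (heq : ∀ x ∈ Icc (-1 : ℝ) 1,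
      iteratedDerivWithin 2 v (Icc (-1 : ℝ) 1) x
        + ν * iteratedDerivWithin 4 v (Icc (-1 : ℝ) 1) x = 0)
    (hbc1 : v (-1) = 0) (hbc2 : v 1 = 0)
    (hbc3 : iteratedDerivWithin 2 v (Icc (-1 : ℝ) 1) (-1) = 0) :
    ∃ c : ℝ, ∀ x ∈ Icc (-1 : ℝ) 1, v x = c * Real.cos (β * x) := by
  set s := Icc (-1 : ℝ) 1
  have hcos : cos β = 0 := cos_eq_zero_iff.2 ⟨n - 1, by rw [hβ]; push_cast; ring⟩
  have hβ0 : β ≠ 0 := fun h ↦ by simp [h] at hcos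
  have hD (k : ℕ) (hk : k < 4) (x : ℝ) (hx : x ∈ s) :=
    hsmooth.hasDerivWithinAt_iteratedDerivWithin (by exact_mod_cast hk)
      (uniqueDiffOn_Icc (by norm_num)) hx
  have hode : ∀ x ∈ s, HasDerivWithinAt (iteratedDerivWithin 3 v s)
      (-β ^ 2 * iteratedDerivWithin 2 v s x) s x := by
    intro x hx
    refine (hD 3 (by norm_num) x hx).congr_deriv ?_
    have h := heq x hx
    rw [hν] at h
    field_simp at h
    show iteratedDerivWithin 4 v s x = _
    linear_combination h
  have hv : ∀ x ∈ s, HasDerivWithinAt v (iteratedDerivWithin 1 v s x) s x := by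
    simpa only [iteratedDerivWithin_zero, zero_add] using hD 0 (by norm_num)
  obtain ⟨K, hw⟩ := (convex_Icc (-1 : ℝ) 1).exists_eq_mul_cos_of_oscillator hβ0 (hD 2 (by norm_num))
    hode (left_mem_Icc.2 (by norm_num)) hbc3 (by simpa using hcos)
  exact ⟨-(K / β ^ 2), eq_mul_cos_of_second_deriv_eq_mul_cos hβ0 hv
    (fun x hx ↦ (hD 1 (by norm_num) x hx).congr_deriv (hw x hx)) hbc1 hbc2 (by simpa using hcos)
    (by simpa using hcos)⟩

/-- The kernel of the linearization `L v = v'' + ν v''''` of the steady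
Kuramoto–Sivashinsky equation at the zero solution, with Dirichlet boundary
conditions on `[-1,1]`, at the bifurcation value `ν = 1/β² = 4/((2n-1)²π²)`
with `β = (2n-1)π/2`, is spanned by `cos(βx)`. -/
theorem dirichlet_kernel_cos (n : ℕ) (hn : 1 ≤ n) (β ν : ℝ)
    (hβ : β = (2 * (n : ℝ) - 1) * Real.pi / 2)
    (hν : ν = 1 / β ^ 2)
    (v : ℝ → ℝ)
    (hsmooth : ContDiffOn ℝ 4 v (Icc (-1 : ℝ) 1))
    (heq : ∀ x ∈ Icc (-1 : ℝ) 1,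
      iteratedDerivWithin 2 v (Icc (-1 : ℝ) 1) x
        + ν * iteratedDerivWithin 4 v (Icc (-1 : ℝ) 1) x = 0)
    (hbc1 : v (-1) = 0) (hbc2 : v 1 = 0)
    (hbc3 : iteratedDerivWithin 2 v (Icc (-1 : ℝ) 1) (-1) = 0)
    (hbc4 : iteratedDerivWithin 2 v (Icc (-1 : ℝ) 1) 1 = 0) :
    ∃ c : ℝ, ∀ x ∈ Icc (-1 : ℝ) 1, v x = c * Real.cos (β * x) :=
  dirichlet_kernel_cos_general n β ν hβ hν v hsmooth heq hbc1 hbc2 hbc3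
end

section
/- Let ν ≠ 0 and let u : ℝ → ℝ be smooth on [−1,1], satisfy u(x)u'(x) + u''(x) + ν·u''''(x) = 0 for all x ∈ [−1,1], and satisfy u(−1) = u(1) = 0 and u''(−1) = u''(1) = 0. Then every even-order derivative of u vanishes at the endpoints: u^{(2m)}(−1) = u^{(2m)}(1) = 0 for all natural numbers m. -/
open Set

/-- If all "cross products" of iterated derivatives of `f` and `g` vanish at a
point of `s`, then the `n`-th iterated derivative of `f * g` vanishes there. -/
lemma ks_prod_iteratedDerivWithin_eq_zero {s : Set ℝ} (hs : UniqueDiffOn ℝ s) :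
    ∀ (n : ℕ) (f g : ℝ → ℝ), (∀ m : ℕ, ContDiffOn ℝ m f s) →
      (∀ m : ℕ, ContDiffOn ℝ m g s) → ∀ x ∈ s,
      (∀ j ≤ n, iteratedDerivWithin j f s x * iteratedDerivWithin (n - j) g s x = 0) →
      iteratedDerivWithin n (fun y => f y * g y) s x = 0 := by
  intro n
  induction n with
  | zero =>
    intro f g hf hg x hx h
    simpa using h 0 le_rfl
  | succ n ih =>
    intro f g hf hg x hx h
    have hfd : DifferentiableOn ℝ f s := (hf 1).differentiableOn (by norm_num)
    have hgd : DifferentiableOn ℝ g s := (hg 1).differentiableOn (by norm_num)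
    have hf' : ∀ m : ℕ, ContDiffOn ℝ m (derivWithin f s) s := fun m =>
      (hf (m + 1)).derivWithin hs (by exact_mod_cast le_rfl)
    have hg' : ∀ m : ℕ, ContDiffOn ℝ m (derivWithin g s) s := fun m =>
      (hg (m + 1)).derivWithin hs (by exact_mod_cast le_rfl)
    have hEq : Set.EqOn (derivWithin (fun y => f y * g y) s)
        ((fun y => derivWithin f s y * g y) + fun y => f y * derivWithin g s y) s := by
      intro y hy
      simp only [Pi.add_apply]
      exact derivWithin_fun_mul (hfd y hy) (hgd y hy)
    rw [iteratedDerivWithin_succ', iteratedDerivWithin_congr hEq hx,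
      iteratedDerivWithin_add hx hs ((hf' n).mul (hg n) x hx) ((hf n).mul (hg' n) x hx)]
    have h1 : iteratedDerivWithin n (fun y => derivWithin f s y * g y) s x = 0 := by
      apply ih _ _ hf' hg x hx
      intro j hj
      rw [← iteratedDerivWithin_succ']
      have : n - j = n + 1 - (j + 1) := by omega
      rw [this]
      exact h (j + 1) (by omega)
    have h2 : iteratedDerivWithin n (fun y => f y * derivWithin g s y) s x = 0 := by
      apply ih _ _ hf hg' x hx
      intro j hj
      rw [← iteratedDerivWithin_succ']
      have : n - j + 1 = n + 1 - j := by omega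
      rw [this]
      exact h j (by omega)
    rw [h1, h2, add_zero]

/-- Iterating iterated derivatives within a set adds the orders. -/
lemma ks_iteratedDerivWithin_iteratedDerivWithin {s : Set ℝ} (hs : UniqueDiffOn ℝ s)
    (f : ℝ → ℝ) :
    ∀ (k n : ℕ) (x : ℝ), x ∈ s →
      iteratedDerivWithin n (iteratedDerivWithin k f s) s x
        = iteratedDerivWithin (n + k) f s x := by
  intro k
  induction k with
  | zero => intro n x hx; rw [iteratedDerivWithin_zero, Nat.add_zero]
  | succ k ih =>
    intro n x hx
    have hEq : Set.EqOn (iteratedDerivWithin (k + 1) f s)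
        (derivWithin (iteratedDerivWithin k f s) s) s := fun y hy =>
      by rw [iteratedDerivWithin_succ]
    rw [iteratedDerivWithin_congr hEq hx, ← iteratedDerivWithin_succ',
      ih (n + 1) x hx]
    ring_nf

/-- All iterated derivatives within of a smooth function are smooth. -/
lemma ks_contDiffOn_iteratedDerivWithin {s : Set ℝ} (hs : UniqueDiffOn ℝ s)
    {f : ℝ → ℝ} (hf : ∀ m : ℕ, ContDiffOn ℝ m f s) :
    ∀ (k m : ℕ), ContDiffOn ℝ m (iteratedDerivWithin k f s) s := by
  intro k
  induction k with
  | zero => intro m; rw [iteratedDerivWithin_zero]; exact hf m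
  | succ k ih =>
    intro m
    have : ContDiffOn ℝ m (derivWithin (iteratedDerivWithin k f s) s) s :=
      (ih (m + 1)).derivWithin hs (by exact_mod_cast le_rfl)
    exact this.congr fun y hy => by rw [iteratedDerivWithin_succ]

/-- For a smooth equilibrium solution `u` of the steady Kuramoto–Sivashinsky
equation `u u' + u'' + ν u'''' = 0` on `[-1,1]` with Dirichlet boundary
conditions `u(±1) = u''(±1) = 0` and `ν ≠ 0`, every even-order derivative
of `u` vanishes at the endpoints. -/
theorem even_derivatives_vanish_at_endpoints (ν : ℝ) (hν : ν ≠ 0) (u : ℝ → ℝ)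
    (hsmooth : ContDiffOn ℝ (⊤ : ℕ∞) u (Icc (-1 : ℝ) 1))
    (heq : ∀ x ∈ Icc (-1 : ℝ) 1,
      u x * derivWithin u (Icc (-1 : ℝ) 1) x
        + iteratedDerivWithin 2 u (Icc (-1 : ℝ) 1) x
        + ν * iteratedDerivWithin 4 u (Icc (-1 : ℝ) 1) x = 0)
    (hbc1 : u (-1) = 0) (hbc2 : u 1 = 0)
    (hbc3 : iteratedDerivWithin 2 u (Icc (-1 : ℝ) 1) (-1) = 0)
    (hbc4 : iteratedDerivWithin 2 u (Icc (-1 : ℝ) 1) 1 = 0) :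
    ∀ m : ℕ,
      iteratedDerivWithin (2 * m) u (Icc (-1 : ℝ) 1) (-1) = 0 ∧
      iteratedDerivWithin (2 * m) u (Icc (-1 : ℝ) 1) 1 = 0 := by
  set s : Set ℝ := Icc (-1 : ℝ) 1 with hsdef
  have hs : UniqueDiffOn ℝ s := uniqueDiffOn_Icc (by norm_num)
  have hu : ∀ m : ℕ, ContDiffOn ℝ m u s := fun m => hsmooth.of_le (by exact_mod_cast le_top)
  have hiter := ks_contDiffOn_iteratedDerivWithin hs hu
  have hu' : ∀ m : ℕ, ContDiffOn ℝ m (derivWithin u s) s := fun m =>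
    (hu (m + 1)).derivWithin hs (by exact_mod_cast le_rfl)
  -- the key pointwise claim
  have key : ∀ x ∈ s, u x = 0 → iteratedDerivWithin 2 u s x = 0 →
      ∀ m : ℕ, iteratedDerivWithin (2 * m) u s x = 0 := by
    intro x hx h0 h2
    have main : ∀ m : ℕ, ∀ j ≤ m, iteratedDerivWithin (2 * j) u s x = 0 := by
      intro m
      induction m with
      | zero =>
        intro j hj
        interval_cases j
        simpa using h0
      | succ m ihm =>
        intro j hj
        rcases Nat.lt_or_ge j (m + 1) with hlt | hge
        · exact ihm j (by omega)
        have hj' : j = m + 1 := by omega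
        subst hj'
        match m, ihm with
        | 0, _ => simpa using h2
        | (k + 1), ihm =>
          -- differentiate the equation 2k times
          have heqn : Set.EqOn
              ((fun y => u y * derivWithin u s y) + fun y =>
                iteratedDerivWithin 2 u s y + ν * iteratedDerivWithin 4 u s y)
              (fun _ => (0 : ℝ)) s := by
            intro y hy
            have := heq y hy
            simp only [Pi.add_apply]
            linarith
          have hzero : iteratedDerivWithin (2 * k)
              ((fun y => u y * derivWithin u s y) + fun y =>
                iteratedDerivWithin 2 u s y + ν * iteratedDerivWithin 4 u s y) s x = 0 := by
            rw [iteratedDerivWithin_congr heqn hx,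
              iteratedDerivWithin_eq_iteratedFDerivWithin,
              iteratedFDerivWithin_zero_fun]
            simp
          have hA : iteratedDerivWithin (2 * k)
              (fun y => u y * derivWithin u s y) s x = 0 := by
            apply ks_prod_iteratedDerivWithin_eq_zero hs _ _ _ hu hu' x hx
            intro i hi
            rcases Nat.even_or_odd i with ⟨a, ha⟩ | ⟨a, ha⟩
            · have : iteratedDerivWithin i u s x = 0 := by
                have h2a : i = 2 * a := by omega
                rw [h2a]
                exact ihm a (by omega)
              rw [this, zero_mul]
            · have hsucc : iteratedDerivWithin (2 * k - i) (derivWithin u s) s x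
                  = iteratedDerivWithin (2 * k - i + 1) u s x :=
                by rw [iteratedDerivWithin_succ']
              have h2b : 2 * k - i + 1 = 2 * (k - a) := by omega
              have : iteratedDerivWithin (2 * k - i) (derivWithin u s) s x = 0 := by
                rw [hsucc, h2b]
                exact ihm (k - a) (by omega)
              rw [this, mul_zero]
          have hB : iteratedDerivWithin (2 * k)
              (fun y => iteratedDerivWithin 2 u s y + ν * iteratedDerivWithin 4 u s y) s x
                = iteratedDerivWithin (2 * k + 2) u s x
                  + ν * iteratedDerivWithin (2 * k + 4) u s x := by
            show iteratedDerivWithin (2 * k)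
              ((iteratedDerivWithin 2 u s) + fun y => ν * iteratedDerivWithin 4 u s y) s x = _
            rw [iteratedDerivWithin_add hx hs (hiter 2 (2 * k) x hx)
                ((contDiffOn_const.mul (hiter 4 (2 * k))) x hx),
              iteratedDerivWithin_const_mul hx hs ν (hiter 4 (2 * k) x hx),
              ks_iteratedDerivWithin_iteratedDerivWithin hs u 2 (2 * k) x hx,
              ks_iteratedDerivWithin_iteratedDerivWithin hs u 4 (2 * k) x hx]
          rw [iteratedDerivWithin_add hx hs ((hu (2 * k)).mul (hu' (2 * k)) x hx)
              (((hiter 2 (2 * k)).add ((contDiffOn_const).mul (hiter 4 (2 * k)))) x hx),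
            hA, hB, zero_add] at hzero
          have h22 : iteratedDerivWithin (2 * k + 2) u s x = 0 := by
            have : 2 * k + 2 = 2 * (k + 1) := by ring
            rw [this]
            exact ihm (k + 1) le_rfl
          rw [h22, zero_add] at hzero
          have h24 : iteratedDerivWithin (2 * k + 4) u s x = 0 := by
            rcases mul_eq_zero.1 hzero with h | h
            · exact absurd h hν
            · exact h
          have : 2 * (k + 1 + 1) = 2 * k + 4 := by ring
          rw [this]
          exact h24
    exact fun m => main m m le_rfl
  have hm1 : (-1 : ℝ) ∈ s := by constructor <;> norm_num
  have hp1 : (1 : ℝ) ∈ s := by constructor <;> norm_num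
  intro m
  exact ⟨key (-1) hm1 hbc1 hbc3 m, key 1 hp1 hbc2 hbc4 m⟩
end

section
/- Let n ≥ 1 be a natural number, let k = n − 1/2, and let ν ∈ ℝ. Suppose v : ℝ → ℝ is smooth, 4-periodic, satisfies v(x)v'(x) + v''(x) + ν·v''''(x) = 0 for all x ∈ ℝ, and has isotropy containing Σ_{k,1/2k}, i.e., v(x + 2/k) = v(x) and v(x) = −v(−x − 1/k) for all x. Then: (i) v(x) = −v(−2−x) for all x, so the restriction of v to [−1,1] satisfies the Dirichlet boundary conditions v(±1) = v''(±1) = 0; (ii) the translated function w(x) = v(x − 1/k) satisfies w(x) = −v(−x) for all x and is also a smooth 4-periodic solution with the same symmetries; hence the two solutions v and w of the Dirichlet problem obtained by restriction to [−1,1] are related by the reflection κ.u(x) = −u(−x). (The pair of solutions bifurcating at ν = 1/(kπ)² for k = n − 1/2 lie on the same κ-orbit.) -/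
open Set

lemma iter_trans (v : ℝ → ℝ) (c : ℝ) (h : ∀ x, v (x + c) = v x) :
    ∀ (m : ℕ) (x : ℝ), v (x + m * c) = v x := by
  intro m
  induction m with
  | zero => simp
  | succ m ih =>
    intro x
    have : x + (m + 1 : ℕ) * c = (x + c) + m * c := by push_cast; ring
    rw [this, ih, h]

/-- For `k = n - 1/2`, a smooth 4-periodic equilibrium solution `v` of the
steady Kuramoto–Sivashinsky equation with isotropy containing
`Σ_{k,1/2k} = ⟨2/k, v(x) ↦ -v(-x - 1/k)⟩` restricts to a solution of the
Dirichlet problem on `[-1,1]`, and its translate `w(x) = v(x - 1/k)` satisfies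
`w(x) = -v(-x)` and is again a smooth 4-periodic solution with the same
symmetries: the pair of bifurcating solutions lies on the same κ-orbit. -/
theorem half_integer_pair_on_kappa_orbit (n : ℕ) (hn : 1 ≤ n) (k ν : ℝ)
    (hk : k = (n : ℝ) - 1 / 2) (v : ℝ → ℝ)
    (hsmooth : ContDiff ℝ (⊤ : ℕ∞) v)
    (hper : ∀ x : ℝ, v (x + 4) = v x)
    (heq : ∀ x : ℝ,
      v x * deriv v x + iteratedDeriv 2 v x + ν * iteratedDeriv 4 v x = 0)
    (hsym1 : ∀ x : ℝ, v (x + 2 / k) = v x)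
    (hsym2 : ∀ x : ℝ, v x = -v (-x - 1 / k)) :
    ((∀ x : ℝ, v x = -v (-2 - x)) ∧
      v (-1) = 0 ∧ v 1 = 0 ∧
      iteratedDeriv 2 v (-1) = 0 ∧ iteratedDeriv 2 v 1 = 0) ∧
    ((∀ x : ℝ, v (x - 1 / k) = -v (-x)) ∧
      ContDiff ℝ (⊤ : ℕ∞) (fun x => v (x - 1 / k)) ∧
      (∀ x : ℝ, v (x + 4 - 1 / k) = v (x - 1 / k)) ∧
      (∀ x : ℝ,
        v (x - 1 / k) * deriv (fun y => v (y - 1 / k)) x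
          + iteratedDeriv 2 (fun y => v (y - 1 / k)) x
          + ν * iteratedDeriv 4 (fun y => v (y - 1 / k)) x = 0) ∧
      (∀ x : ℝ, v (x + 2 / k - 1 / k) = v (x - 1 / k)) ∧
      (∀ x : ℝ, v (x - 1 / k) = -v (-x - 1 / k - 1 / k))) := by
  have hk0 : k ≠ 0 := by
    have : (1 : ℝ) ≤ n := by exact_mod_cast hn
    rw [hk]; linarith
  -- translation invariance by (n-1)·(2/k)
  have hiter := iter_trans v (2 / k) hsym1
  have hshift : ∀ x : ℝ, v (x + (2 - 1 / k)) = v x := by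
    intro x
    have h1 : ((n - 1 : ℕ) : ℝ) * (2 / k) = 2 - 1 / k := by
      have : ((n - 1 : ℕ) : ℝ) = (n : ℝ) - 1 := by
        have : (1 : ℕ) ≤ n := hn
        push_cast [Nat.cast_sub this]; ring
      rw [this]
      field_simp
      rw [hk]; ring
    rw [← h1]; exact hiter _ x
  have hrefl : ∀ x : ℝ, v x = -v (-2 - x) := by
    intro x
    have := hsym2 x
    rw [this]
    have : (-2 - x) + (2 - 1 / k) = -x - 1 / k := by ring
    rw [← this, hshift]
  -- second derivative reflection
  have hd2 : ∀ x : ℝ, iteratedDeriv 2 v x = -iteratedDeriv 2 v (-2 - x) := by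
    intro x
    have hv : v = fun x => -((fun y => v (-2 + y)) (-x)) := by
      funext y
      have := hrefl y
      simpa [sub_eq_add_neg] using this
    conv_lhs => rw [hv]
    rw [iteratedDeriv_fun_neg]
    have := iteratedDeriv_comp_neg 2 (fun y => v (-2 + y)) x
    rw [this]
    have h2 := iteratedDeriv_comp_const_add 2 v (-2)
    have h2' := congrFun h2 (-x)
    simp only [h2']
    norm_num [sub_eq_add_neg]
  -- periodicity of second derivative
  have hd2per : ∀ x : ℝ, iteratedDeriv 2 v (x + 4) = iteratedDeriv 2 v x := by
    intro x
    have hv : v = fun y => v (y + 4) := by funext y; rw [hper]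
    conv_rhs => rw [hv]
    rw [iteratedDeriv_comp_add_const]
  constructor
  · refine ⟨hrefl, ?_, ?_, ?_, ?_⟩
    · have := hrefl (-1); norm_num at this; linarith
    · have h1 := hrefl 1
      have h2 : v (-3) = v 1 := by have := hper (-3); norm_num at this; linarith [this]
      rw [show (-2 - (1:ℝ)) = -3 by norm_num, h2] at h1
      linarith
    · have := hd2 (-1); norm_num at this; linarith
    · have h1 := hd2 1
      have h2 : iteratedDeriv 2 v (-3) = iteratedDeriv 2 v 1 := by
        have := hd2per (-3); norm_num at this; linarith [this]
      rw [show (-2 - (1:ℝ)) = -3 by norm_num, h2] at h1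
      linarith
  · have hw : ∀ x : ℝ, v (x - 1 / k) = -v (-x) := by
      intro x
      have := hsym2 (-x)
      rw [show -(-x) - 1 / k = x - 1 / k by ring] at this
      linarith
    have hcomp : (fun x : ℝ => v (x - 1 / k)) = fun x => v (x + -(1 / k)) := by
      funext x; rw [sub_eq_add_neg]
    have hderiv : ∀ x : ℝ, deriv (fun y => v (y - 1 / k)) x = deriv v (x - 1 / k) := by
      intro x; exact deriv_comp_sub_const (f := v) (a := 1 / k) (x := x)
    have hid : ∀ (m : ℕ) (x : ℝ),
        iteratedDeriv m (fun y => v (y - 1 / k)) x = iteratedDeriv m v (x - 1 / k) := by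
      intro m x
      rw [hcomp, iteratedDeriv_comp_add_const]
      simp [sub_eq_add_neg]
    refine ⟨hw, ?_, ?_, ?_, ?_, ?_⟩
    · rw [hcomp]
      exact hsmooth.comp (contDiff_id.add contDiff_const)
    · intro x
      rw [show x + 4 - 1 / k = (x - 1 / k) + 4 by ring, hper]
    · intro x
      rw [hderiv, hid 2, hid 4]
      exact heq (x - 1 / k)
    · intro x
      rw [show x + 2 / k - 1 / k = (x - 1 / k) + 2 / k by ring, hsym1]
    · intro x
      rw [hw x]
      have h1 := hsym1 (-x - 2 / k)
      rw [show -x - 2 / k + 2 / k = -x by ring] at h1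
      rw [show -x - 1 / k - 1 / k = -x - 2 / k by ring, h1]
end

section
/- Let n ≥ 1 be a natural number, let β = (2n−1)π/2, and let ν* = 1/β². Define w(x) = sin(2βx)/(6π(2n−1)). Then: (i) w''(x) + ν*·w''''(x) = β·sin(2βx) = −(d/dx)(cos²(βx)) for all x ∈ ℝ; (ii) w(−1) = w(1) = 0 and w''(−1) = w''(1) = 0; (iii) ∫_{−1}^{1} w(x)·cos(βx) dx = 0; and (iv) w is the unique four times continuously differentiable function on [−1,1] with properties (i)–(iii), i.e., any other such function agrees with w on [−1,1]. (This function is the second-order term w_{y²}(0,ν*) in the Lyapunov–Schmidt reduction at the bifurcation point ν* with kernel spanned by e(x) = cos(βx).) -/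
/-!
Any other solution `w` differs from `wLS` by a solution `d` of the homogeneous problem. Then
`u = d + β⁻² d''` has `u'' = 0` and vanishes at `±1`, hence `u = 0`; so `d'' = -β² d` with
`d(-1) = 0`, and since `cos β = 0` the energy argument for this harmonic oscillator forces
`d = C cos(βx)`. Orthogonality to `cos(βx)` then gives `C = 0`, because `∫₋₁¹ cos²(βx) dx = 1`.
The properties of `wLS` itself are direct computations, orthogonality holding because
`wLS(x) cos(βx)` is odd.
-/

open Set

noncomputable def wLS (β : ℝ) (n : ℕ) : ℝ → ℝ :=
  fun x => Real.sin (2 * β * x) / (6 * Real.pi * (2 * (n : ℝ) - 1))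

open Real

section IteratedDerivWithin

variable {𝕜 : Type*} [NontriviallyNormedField 𝕜] {F : Type*} [NormedAddCommGroup F]
  [NormedSpace 𝕜 F] {f : 𝕜 → F} {s : Set 𝕜}

theorem iteratedDerivWithin_iteratedDerivWithin (m n : ℕ) :
    iteratedDerivWithin m (iteratedDerivWithin n f s) s = iteratedDerivWithin (m + n) f s := by
  induction m with
  | zero => simp
  | succ m ih => rw [iteratedDerivWithin_succ, ih, add_right_comm, iteratedDerivWithin_succ]

theorem iteratedDerivWithin_two :
    iteratedDerivWithin 2 f s = derivWithin (derivWithin f s) s := by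
  rw [iteratedDerivWithin_succ, iteratedDerivWithin_one]

theorem ContDiffOn.iteratedDerivWithin {m n : ℕ} (hf : ContDiffOn 𝕜 (m + n : ℕ) f s)
    (hs : UniqueDiffOn 𝕜 s) : ContDiffOn 𝕜 m (iteratedDerivWithin n f s) s := by
  induction n generalizing m with
  | zero => simpa using hf
  | succ n ih =>
    rw [iteratedDerivWithin_succ]
    exact (ih (m := m + 1) (by rwa [add_right_comm, add_assoc])).derivWithin hs
      (by push_cast; exact le_rfl)

theorem iteratedDerivWithin_sub_of_contDiff {x : 𝕜} {n : ℕ} {g : 𝕜 → F}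
    (hs : UniqueDiffOn 𝕜 s) (hx : x ∈ s) (hf : ContDiffOn 𝕜 n f s) (hg : ContDiff 𝕜 n g) :
    iteratedDerivWithin n (f - g) s x = iteratedDerivWithin n f s x - iteratedDeriv n g x := by
  rw [iteratedDerivWithin_sub hx hs (hf x hx) hg.contDiffWithinAt,
    iteratedDerivWithin_eq_iteratedDeriv hs hg.contDiffAt hx]

end IteratedDerivWithin

theorem iteratedDeriv_two_mul_sin_mul_div (k : ℕ) (c D : ℝ) :
    iteratedDeriv (2 * k) (fun x => sin (c * x) / D)
      = fun x => (-c ^ 2) ^ k * (sin (c * x) / D) := by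
  funext x
  rw [iteratedDeriv_div_const, iteratedDeriv_comp_const_mul contDiff_sin, iteratedDeriv_even_sin]
  simp only [Pi.mul_apply, Pi.pow_apply, Pi.neg_apply, Pi.one_apply]
  ring

theorem deriv_cos_mul_sq (β x : ℝ) :
    deriv (fun y => cos (β * y) ^ 2) x = -(β * sin (2 * β * x)) := by
  have h : HasDerivAt (fun y => cos (β * y) ^ 2) _ x :=
    ((hasDerivAt_id' x).const_mul β).cos.fun_pow 2
  rw [h.deriv, show 2 * β * x = 2 * (β * x) by ring, sin_two_mul]
  push_cast
  ring

theorem Function.Odd.intervalIntegral_eq_zero {f : ℝ → ℝ} (hf : Function.Odd f) (a : ℝ) :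
    ∫ x in -a..a, f x = 0 := by
  have h := intervalIntegral.integral_comp_neg (a := -a) (b := a) f
  simp only [hf _, intervalIntegral.integral_neg, neg_neg] at h
  linarith

theorem integral_cos_mul_sq_of_cos_eq_zero {β a : ℝ} (h : cos (β * a) = 0) :
    ∫ x in -a..a, cos (β * x) ^ 2 = a := by
  have hβ : β ≠ 0 := by rintro rfl; simp at h
  rw [intervalIntegral.integral_comp_mul_left (fun x => cos x ^ 2) hβ, integral_cos_sq,
    mul_neg, cos_neg, sin_neg, h, smul_eq_mul]
  field_simp
  ring

section HarmonicOscillator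

variable {a b k : ℝ} {y z : ℝ → ℝ}

theorem eqOn_zero_of_iteratedDerivWithin_two_eq_neg_sq_mul (hab : a < b)
    (hy : ContDiffOn ℝ 2 y (Icc a b))
    (hode : ∀ x ∈ Icc a b, iteratedDerivWithin 2 y (Icc a b) x = -k ^ 2 * y x)
    (ha : y a = 0) (ha' : derivWithin y (Icc a b) a = 0) : EqOn y 0 (Icc a b) := by
  set s := Icc a b
  have hs : UniqueDiffOn ℝ s := uniqueDiffOn_Icc hab
  have hy1 : DifferentiableOn ℝ y s := hy.differentiableOn two_ne_zero
  have hy2 : DifferentiableOn ℝ (derivWithin y s) s :=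
    (hy.derivWithin (m := 1) hs le_rfl).differentiableOn one_ne_zero
  set E : ℝ → ℝ := fun x => k ^ 2 * (y x * y x) + derivWithin y s x * derivWithin y s x
  have hEd : DifferentiableOn ℝ E s :=
    ((hy1.mul hy1).const_mul _).add (hy2.mul hy2)
  have hE' : ∀ x ∈ s, HasDerivWithinAt E 0 s x := by
    intro x hx
    have hy1x := (hy1 x hx).hasDerivWithinAt
    have hy2x := (hy2 x hx).hasDerivWithinAt
    have h := ((hy1x.mul hy1x).const_mul (k ^ 2)).add (hy2x.mul hy2x)
    rw [← iteratedDerivWithin_two, hode x hx] at h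
    exact h.congr_deriv (by ring)
  have hE : ∀ x ∈ s, E x = 0 := fun x hx => by
    rw [constant_of_derivWithin_zero hEd (fun x hx => (hE' x (Ico_subset_Icc_self hx)).derivWithin
      (hs x (Ico_subset_Icc_self hx))) x hx]
    simp [E, ha, ha']
  have hy' : ∀ x ∈ s, derivWithin y s x = 0 := fun x hx => by
    have := hE x hx
    nlinarith [mul_self_nonneg (k * y x), mul_self_nonneg (derivWithin y s x)]
  intro x hx
  rw [constant_of_derivWithin_zero hy1 (fun x hx => hy' x (Ico_subset_Icc_self hx)) x hx, ha]
  rfl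

theorem eqOn_of_iteratedDerivWithin_two_eq_neg_sq_mul (hab : a < b)
    (hy : ContDiffOn ℝ 2 y (Icc a b)) (hz : ContDiffOn ℝ 2 z (Icc a b))
    (hy'' : ∀ x ∈ Icc a b, iteratedDerivWithin 2 y (Icc a b) x = -k ^ 2 * y x)
    (hz'' : ∀ x ∈ Icc a b, iteratedDerivWithin 2 z (Icc a b) x = -k ^ 2 * z x)
    (ha : y a = z a) (ha' : derivWithin y (Icc a b) a = derivWithin z (Icc a b) a) :
    EqOn y z (Icc a b) := by
  have hs : UniqueDiffOn ℝ (Icc a b) := uniqueDiffOn_Icc hab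
  have haI : a ∈ Icc a b := left_mem_Icc.2 hab.le
  intro x hx
  rw [← sub_eq_zero]
  refine eqOn_zero_of_iteratedDerivWithin_two_eq_neg_sq_mul (k := k) hab (hy.sub hz)
    (fun x hx => ?_) (sub_eq_zero.2 ha) ?_ hx
  · rw [← Pi.sub_def, iteratedDerivWithin_sub hx hs (hy x hx) (hz x hx), hy'' x hx, hz'' x hx]
    ring
  · rw [derivWithin_fun_sub ((hy.differentiableOn two_ne_zero) a haI)
      ((hz.differentiableOn two_ne_zero) a haI), ha', sub_self]

theorem eqOn_zero_of_iteratedDerivWithin_two_eq_zero (hab : a < b)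
    (hy : ContDiffOn ℝ 2 y (Icc a b))
    (hode : ∀ x ∈ Icc a b, iteratedDerivWithin 2 y (Icc a b) x = 0)
    (ha : y a = 0) (hb : y b = 0) : EqOn y 0 (Icc a b) := by
  set K := derivWithin y (Icc a b) a
  have hs : UniqueDiffOn ℝ (Icc a b) := uniqueDiffOn_Icc hab
  have hline : EqOn y (fun x => K * (x - a)) (Icc a b) := by
    refine eqOn_of_iteratedDerivWithin_two_eq_neg_sq_mul (k := 0) hab hy (by fun_prop)
      (fun x hx => by simp [hode x hx]) (fun x hx => ?_) (by simp [ha]) ?_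
    · rw [iteratedDerivWithin_eq_iteratedDeriv hs (by fun_prop) hx]
      simp [iteratedDeriv_succ]
    · have hz : HasDerivAt (fun x => K * (x - a)) K a := by
        simpa using ((hasDerivAt_id a).sub_const a).const_mul K
      rw [hz.hasDerivWithinAt.derivWithin (hs a (left_mem_Icc.2 hab.le))]
  have hK : K = 0 := by
    have := hline (right_mem_Icc.2 hab.le)
    simp only [hb] at this
    exact (mul_eq_zero.1 this.symm).resolve_right (sub_ne_zero.2 hab.ne')
  intro x hx
  simp [hline hx, hK]

theorem exists_eqOn_const_mul_cos {β : ℝ} (hab : a < b) (hcos : cos (β * a) = 0)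
    (hy : ContDiffOn ℝ 2 y (Icc a b))
    (hode : ∀ x ∈ Icc a b, iteratedDerivWithin 2 y (Icc a b) x = -β ^ 2 * y x)
    (ha : y a = 0) : ∃ C, EqOn y (fun x => C * cos (β * x)) (Icc a b) := by
  have hs : UniqueDiffOn ℝ (Icc a b) := uniqueDiffOn_Icc hab
  have hβ : β ≠ 0 := by rintro rfl; simp at hcos
  have hsin : sin (β * a) ≠ 0 := by
    intro h; simpa [h, hcos] using sin_sq_add_cos_sq (β * a)
  refine ⟨derivWithin y (Icc a b) a / (-(sin (β * a) * β)), ?_⟩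
  refine eqOn_of_iteratedDerivWithin_two_eq_neg_sq_mul hab hy (by fun_prop) hode
    (fun x hx => ?_) (by simp [ha, hcos]) ?_
  · rw [iteratedDerivWithin_eq_iteratedDeriv hs (by fun_prop) hx, iteratedDeriv_const_mul_field,
      iteratedDeriv_comp_const_mul contDiff_cos, show (2 : ℕ) = 2 * 1 from rfl,
      iteratedDeriv_even_cos]
    simp only [Pi.mul_apply, Pi.pow_apply, Pi.neg_apply, Pi.one_apply]
    ring
  · have hz := ((hasDerivAt_id' a).const_mul β).cos.const_mul
      (derivWithin y (Icc a b) a / (-(sin (β * a) * β)))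
    rw [hz.hasDerivWithinAt.derivWithin (hs a (left_mem_Icc.2 hab.le))]
    field_simp

end HarmonicOscillator

theorem exists_eqOn_const_mul_cos_of_fourth_order {a b β : ℝ} {d : ℝ → ℝ} (hab : a < b)
    (hcos : cos (β * a) = 0) (hd : ContDiffOn ℝ 4 d (Icc a b))
    (hode : ∀ x ∈ Icc a b, iteratedDerivWithin 2 d (Icc a b) x
      + 1 / β ^ 2 * iteratedDerivWithin 4 d (Icc a b) x = 0)
    (ha : d a = 0) (hb : d b = 0) (ha'' : iteratedDerivWithin 2 d (Icc a b) a = 0)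
    (hb'' : iteratedDerivWithin 2 d (Icc a b) b = 0) :
    ∃ C, EqOn d (fun x => C * cos (β * x)) (Icc a b) := by
  set s := Icc a b
  have hs : UniqueDiffOn ℝ s := uniqueDiffOn_Icc hab
  have hβ : β ≠ 0 := by rintro rfl; simp at hcos
  have hd2 : ContDiffOn ℝ 2 d s := hd.of_le (by norm_num)
  have hd'' : ContDiffOn ℝ 2 (iteratedDerivWithin 2 d s) s :=
    hd.iteratedDerivWithin (m := 2) (n := 2) hs
  set u : ℝ → ℝ := fun x => d x + 1 / β ^ 2 * iteratedDerivWithin 2 d s x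
  have hu : ContDiffOn ℝ 2 u s := hd2.add (contDiffOn_const.mul hd'')
  have hu'' : ∀ x ∈ s, iteratedDerivWithin 2 u s x = 0 := fun x hx => by
    rw [iteratedDerivWithin_fun_add hx hs (hd2 x hx) ((contDiffOn_const.mul hd'') x hx),
      iteratedDerivWithin_const_mul_field, iteratedDerivWithin_iteratedDerivWithin]
    exact hode x hx
  have hu0 := eqOn_zero_of_iteratedDerivWithin_two_eq_zero hab hu hu''
    (by simp [u, ha, ha'']) (by simp [u, hb, hb''])
  refine exists_eqOn_const_mul_cos hab hcos hd2 (fun x hx => ?_) ha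
  have h := hu0 hx
  simp only [u, Pi.zero_apply] at h
  field_simp at h
  linarith

theorem eqOn_of_fourth_order_of_integral_mul_cos_eq {a β : ℝ} {w p : ℝ → ℝ} (ha : 0 < a)
    (hcos : cos (β * a) = 0) (hw : ContDiffOn ℝ 4 w (Icc (-a) a)) (hp : ContDiff ℝ 4 p)
    (hode : ∀ x ∈ Icc (-a) a, iteratedDerivWithin 2 w (Icc (-a) a) x
      + 1 / β ^ 2 * iteratedDerivWithin 4 w (Icc (-a) a) x
      = iteratedDeriv 2 p x + 1 / β ^ 2 * iteratedDeriv 4 p x)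
    (hwl : w (-a) = p (-a)) (hwr : w a = p a)
    (hwl'' : iteratedDerivWithin 2 w (Icc (-a) a) (-a) = iteratedDeriv 2 p (-a))
    (hwr'' : iteratedDerivWithin 2 w (Icc (-a) a) a = iteratedDeriv 2 p a)
    (horth : ∫ x in -a..a, w x * cos (β * x) = ∫ x in -a..a, p x * cos (β * x)) :
    EqOn w p (Icc (-a) a) := by
  have hab : -a < a := by linarith
  have hs : UniqueDiffOn ℝ (Icc (-a) a) := uniqueDiffOn_Icc hab
  have hl : -a ∈ Icc (-a) a := left_mem_Icc.2 hab.le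
  have hr : a ∈ Icc (-a) a := right_mem_Icc.2 hab.le
  have hsub : ∀ n ≤ 4, ∀ x ∈ Icc (-a) a, iteratedDerivWithin n (w - p) (Icc (-a) a) x
      = iteratedDerivWithin n w (Icc (-a) a) x - iteratedDeriv n p x := fun n hn x hx =>
    iteratedDerivWithin_sub_of_contDiff hs hx (hw.of_le (by exact_mod_cast hn))
      (hp.of_le (by exact_mod_cast hn))
  obtain ⟨C, hC⟩ := exists_eqOn_const_mul_cos_of_fourth_order (d := w - p) hab
    (by rwa [mul_neg, cos_neg]) (hw.sub hp.contDiffOn) (fun x hx => by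
      rw [hsub 2 (by norm_num) x hx, hsub 4 (by norm_num) x hx]
      linear_combination hode x hx)
    (by simp [hwl]) (by simp [hwr]) (by rw [hsub 2 (by norm_num) _ hl, hwl'', sub_self])
    (by rw [hsub 2 (by norm_num) _ hr, hwr'', sub_self])
  have hint : ∀ f : ℝ → ℝ, ContinuousOn f (Icc (-a) a) →
      IntervalIntegrable (fun x => f x * cos (β * x)) MeasureTheory.volume (-a) a :=
    fun f hf => ((hf.mul (by fun_prop)).mono (by rw [uIcc_of_le hab.le])).intervalIntegrable
  have hCa : C * a = 0 := calc
    C * a = ∫ x in -a..a, C * cos (β * x) ^ 2 := by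
      rw [intervalIntegral.integral_const_mul, integral_cos_mul_sq_of_cos_eq_zero hcos]
    _ = ∫ x in -a..a, (w x - p x) * cos (β * x) := by
      refine intervalIntegral.integral_congr fun x hx => ?_
      rw [uIcc_of_le hab.le] at hx
      rw [show w x - p x = C * cos (β * x) from hC hx]
      ring
    _ = 0 := by
      simp only [sub_mul]
      rw [intervalIntegral.integral_sub (hint w hw.continuousOn)
        (hint p hp.continuous.continuousOn), horth, sub_self]
  have hC0 : C = 0 := (mul_eq_zero.1 hCa).resolve_right ha.ne'
  intro x hx
  simpa [hC0, sub_eq_zero] using hC hx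

theorem iteratedDeriv_wLS (β : ℝ) (n k : ℕ) :
    iteratedDeriv (2 * k) (wLS β n) = fun x => (-(2 * β) ^ 2) ^ k * wLS β n x :=
  iteratedDeriv_two_mul_sin_mul_div k (2 * β) _

theorem wLS_ode {β : ℝ} {n : ℕ} (hβ : β = (2 * (n : ℝ) - 1) * π / 2) (hcos : cos β = 0) (x : ℝ) :
    iteratedDeriv 2 (wLS β n) x + 1 / β ^ 2 * iteratedDeriv 4 (wLS β n) x
      = β * sin (2 * β * x) := by
  have hβ0 : β ≠ 0 := by rintro rfl; simp at hcos
  have hD : 6 * π * (2 * (n : ℝ) - 1) = 12 * β := by rw [hβ]; ring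
  rw [show 4 = 2 * 2 from rfl, show 2 = 2 * 1 from rfl, iteratedDeriv_wLS, iteratedDeriv_wLS]
  simp only [wLS, hD]
  field_simp
  ring

theorem lyapunov_schmidt_second_order_term_general (n : ℕ) (β νstar : ℝ)
    (hβ : β = (2 * (n : ℝ) - 1) * Real.pi / 2)
    (hν : νstar = 1 / β ^ 2) :
    (∀ x : ℝ,
      iteratedDeriv 2 (wLS β n) x + νstar * iteratedDeriv 4 (wLS β n) x
        = β * Real.sin (2 * β * x) ∧
      β * Real.sin (2 * β * x)
        = -deriv (fun y => Real.cos (β * y) ^ 2) x) ∧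
    (wLS β n (-1) = 0 ∧ wLS β n 1 = 0 ∧
      iteratedDeriv 2 (wLS β n) (-1) = 0 ∧ iteratedDeriv 2 (wLS β n) 1 = 0) ∧
    ((∫ x in (-1 : ℝ)..1, wLS β n x * Real.cos (β * x)) = 0) ∧
    (∀ w : ℝ → ℝ, ContDiffOn ℝ 4 w (Icc (-1 : ℝ) 1) →
      (∀ x ∈ Icc (-1 : ℝ) 1,
        iteratedDerivWithin 2 w (Icc (-1 : ℝ) 1) x
          + νstar * iteratedDerivWithin 4 w (Icc (-1 : ℝ) 1) x
          = β * Real.sin (2 * β * x)) →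
      w (-1) = 0 → w 1 = 0 →
      iteratedDerivWithin 2 w (Icc (-1 : ℝ) 1) (-1) = 0 →
      iteratedDerivWithin 2 w (Icc (-1 : ℝ) 1) 1 = 0 →
      (∫ x in (-1 : ℝ)..1, w x * Real.cos (β * x)) = 0 →
      ∀ x ∈ Icc (-1 : ℝ) 1, w x = wLS β n x) := by
  subst hν
  have hcos : cos β = 0 := cos_eq_zero_iff.2 ⟨n - 1, by rw [hβ]; push_cast; ring⟩
  have hode := wLS_ode hβ hcos
  have hbd : wLS β n (-1) = 0 ∧ wLS β n 1 = 0 := by simp [wLS, sin_two_mul, hcos]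
  have hbd'' : iteratedDeriv 2 (wLS β n) (-1) = 0 ∧ iteratedDeriv 2 (wLS β n) 1 = 0 := by
    rw [show 2 = 2 * 1 from rfl, iteratedDeriv_wLS]
    simp [hbd]
  have horth : ∫ x in (-1 : ℝ)..1, wLS β n x * cos (β * x) = 0 :=
    Function.Odd.intervalIntegral_eq_zero (fun x => by simp [wLS, neg_div]) 1
  refine ⟨fun x => ⟨hode x, by rw [deriv_cos_mul_sq, neg_neg]⟩, ⟨hbd.1, hbd.2, hbd''⟩, horth,
    fun w hw hwode hwl hwr hwl'' hwr'' hworth => ?_⟩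
  exact eqOn_of_fourth_order_of_integral_mul_cos_eq one_pos (by simpa using hcos) hw
    (by unfold wLS; fun_prop) (fun x hx => (hwode x hx).trans (hode x).symm)
    (hwl.trans hbd.1.symm) (hwr.trans hbd.2.symm) (hwl''.trans hbd''.1.symm)
    (hwr''.trans hbd''.2.symm) (hworth.trans horth.symm)

/-- The function `w(x) = sin(2βx)/(6π(2n-1))` solves
`L₀ w = w'' + ν* w'''' = β sin(2βx) = -(cos²(βx))'` with the Dirichlet boundary
conditions, is orthogonal to the kernel function `e(x) = cos(βx)`, and is the
unique four times continuously differentiable function on `[-1,1]` with these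
properties. -/
theorem lyapunov_schmidt_second_order_term (n : ℕ) (hn : 1 ≤ n) (β νstar : ℝ)
    (hβ : β = (2 * (n : ℝ) - 1) * Real.pi / 2)
    (hν : νstar = 1 / β ^ 2) :
    (∀ x : ℝ,
      iteratedDeriv 2 (wLS β n) x + νstar * iteratedDeriv 4 (wLS β n) x
        = β * Real.sin (2 * β * x) ∧
      β * Real.sin (2 * β * x)
        = -deriv (fun y => Real.cos (β * y) ^ 2) x) ∧
    (wLS β n (-1) = 0 ∧ wLS β n 1 = 0 ∧
      iteratedDeriv 2 (wLS β n) (-1) = 0 ∧ iteratedDeriv 2 (wLS β n) 1 = 0) ∧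
    ((∫ x in (-1 : ℝ)..1, wLS β n x * Real.cos (β * x)) = 0) ∧
    (∀ w : ℝ → ℝ, ContDiffOn ℝ 4 w (Icc (-1 : ℝ) 1) →
      (∀ x ∈ Icc (-1 : ℝ) 1,
        iteratedDerivWithin 2 w (Icc (-1 : ℝ) 1) x
          + νstar * iteratedDerivWithin 4 w (Icc (-1 : ℝ) 1) x
          = β * Real.sin (2 * β * x)) →
      w (-1) = 0 → w 1 = 0 →
      iteratedDerivWithin 2 w (Icc (-1 : ℝ) 1) (-1) = 0 →
      iteratedDerivWithin 2 w (Icc (-1 : ℝ) 1) 1 = 0 →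
      (∫ x in (-1 : ℝ)..1, w x * Real.cos (β * x)) = 0 →
      ∀ x ∈ Icc (-1 : ℝ) 1, w x = wLS β n x) :=
  lyapunov_schmidt_second_order_term_general n β νstar hβ hν
end

section
/- Let n ≥ 1 be a natural number, let β = (2n−1)π/2, let e(x) = cos(βx), and let w(x) = sin(2βx)/(6π(2n−1)). Then the Lyapunov–Schmidt coefficients at the bifurcation point ν* = 1/β² satisfy: (i) g_{yyy} = ∫_{−1}^{1} e(x) · 3·(d/dx)(e(x)·w(x)) dx = 1/8; and (ii) g_{yν} = ∫_{−1}^{1} e(x)·e''(x) dx = −β². In particular g_{yyy}·g_{yν} = −β²/8 < 0, which is the condition establishing that the pitchfork bifurcation of the Dirichlet problem at ν* = 4/((2n−1)²π²) is supercritical. -/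
/-! All that matters about `β = (2n - 1)π/2` is `β ≠ 0` and `cos β = 0`, i.e. `e(±1) = 0`; the
normalising constant `6π(2n - 1)` of `w` is `12β`. Then `sin 2β = sin 4β = 0`, so the modes
`cos 2βx` and `cos 4βx` integrate to zero over `[-1, 1]`. Both integrands are trigonometric
polynomials in these modes, `e · 3(ew)' = 1/16 + cos 2βx / 4 + 3 cos 4βx / 16` and
`e · e'' = -β² (1 + cos 2βx) / 2`, so only their constant terms survive. -/

open Real intervalIntegral

theorem integral_cos_mul_neg_one_one {k : ℝ} (hk : k ≠ 0) :
    ∫ x in (-1 : ℝ)..1, cos (k * x) = 2 * sin k / k := by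
  rw [integral_comp_mul_left _ hk, integral_cos, mul_neg, mul_one, sin_neg, smul_eq_mul]
  field_simp
  ring

theorem iteratedDeriv_two_cos_mul (β : ℝ) :
    iteratedDeriv 2 (fun y => cos (β * y)) = fun x => -β ^ 2 * cos (β * x) := by
  rw [iteratedDeriv_comp_const_mul contDiff_cos, show 2 = 2 * 1 from rfl, iteratedDeriv_even_cos]
  ext x
  simp

theorem hasDerivAt_cos_mul_mul_sin_two_mul_div (β c x : ℝ) :
    HasDerivAt (fun y => cos (β * y) * (sin (2 * β * y) / c))
      (β * (2 * cos (β * x) * cos (2 * β * x) - sin (β * x) * sin (2 * β * x)) / c) x := by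
  have hcos : HasDerivAt (fun y => cos (β * y)) (-sin (β * x) * β) x := by
    simpa using ((hasDerivAt_id x).const_mul β).cos
  have hsin : HasDerivAt (fun y => sin (2 * β * y)) (cos (2 * β * x) * (2 * β)) x := by
    simpa using ((hasDerivAt_id x).const_mul (2 * β)).sin
  exact (hcos.mul (hsin.div_const c)).congr_deriv (by ring)

theorem cos_mul_two_mul_cos_mul_cos_two_mul_sub_sin_mul_sin_two_mul (t : ℝ) :
    cos t * (2 * cos t * cos (2 * t) - sin t * sin (2 * t)) =
      (1 + 4 * cos (2 * t) + 3 * cos (4 * t)) / 4 := by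
  rw [show 4 * t = 2 * (2 * t) by ring, cos_two_mul (2 * t), sin_two_mul, cos_two_mul]
  nlinarith [sin_sq_add_cos_sq t]

section CosEqZero

variable {β : ℝ} (hβ : β ≠ 0) (hcos : cos β = 0)
include hβ hcos

theorem integral_const_add_cos_two_mul_add_cos_four_mul (a b c : ℝ) :
    ∫ x in (-1 : ℝ)..1, (a + b * cos (2 * β * x) + c * cos (4 * β * x)) = 2 * a := by
  have hsin2 : sin (2 * β) = 0 := by rw [sin_two_mul, hcos, mul_zero]
  have hsin4 : sin (4 * β) = 0 := by
    rw [show 4 * β = 2 * (2 * β) by ring, sin_two_mul, hsin2, mul_zero, zero_mul]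
  rw [integral_add, integral_add, integral_const_mul, integral_const_mul,
    integral_cos_mul_neg_one_one (by positivity), integral_cos_mul_neg_one_one (by positivity),
    hsin2, hsin4]
  · norm_num
  all_goals exact Continuous.intervalIntegrable (by fun_prop) _ _

theorem integral_cos_mul_mul_three_mul_deriv_cos_mul_mul_sin_two_mul_div :
    ∫ x in (-1 : ℝ)..1,
        cos (β * x) * (3 * deriv (fun y => cos (β * y) * (sin (2 * β * y) / (12 * β))) x) = 1 / 8 := by
  have hpoint (x : ℝ) :
      cos (β * x) * (3 * deriv (fun y => cos (β * y) * (sin (2 * β * y) / (12 * β))) x) =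
        1 / 16 + 1 / 4 * cos (2 * β * x) + 3 / 16 * cos (4 * β * x) := by
    have h := cos_mul_two_mul_cos_mul_cos_two_mul_sub_sin_mul_sin_two_mul (β * x)
    simp only [← mul_assoc] at h
    rw [(hasDerivAt_cos_mul_mul_sin_two_mul_div β _ x).deriv, mul_comm 12 β,
      mul_div_mul_left _ _ hβ]
    linear_combination h / 4
  simp_rw [hpoint]
  rw [integral_const_add_cos_two_mul_add_cos_four_mul hβ hcos]
  norm_num

theorem integral_cos_mul_mul_iteratedDeriv_two_cos_mul :
    ∫ x in (-1 : ℝ)..1, cos (β * x) * iteratedDeriv 2 (fun y => cos (β * y)) x = -β ^ 2 := by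
  have hpoint (x : ℝ) : cos (β * x) * (-β ^ 2 * cos (β * x)) =
      -β ^ 2 / 2 + -β ^ 2 / 2 * cos (2 * β * x) + 0 * cos (4 * β * x) := by
    rw [mul_assoc 2, cos_two_mul]
    ring
  simp_rw [iteratedDeriv_two_cos_mul, hpoint]
  rw [integral_const_add_cos_two_mul_add_cos_four_mul hβ hcos]
  ring

end CosEqZero

theorem lyapunov_schmidt_coefficients_supercritical_general (n : ℕ) (β : ℝ)
    (hβ : β = (2 * (n : ℝ) - 1) * Real.pi / 2) :
    (∫ x in (-1 : ℝ)..1,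
        Real.cos (β * x) *
          (3 * deriv (fun y => Real.cos (β * y) *
            (Real.sin (2 * β * y) / (6 * Real.pi * (2 * (n : ℝ) - 1)))) x))
      = 1 / 8 ∧
    (∫ x in (-1 : ℝ)..1,
        Real.cos (β * x) * iteratedDeriv 2 (fun y => Real.cos (β * y)) x)
      = -β ^ 2 ∧
    (1 / 8 : ℝ) * (-β ^ 2) < 0 := by
  have hcos : cos β = 0 := cos_eq_zero_iff.2 ⟨n - 1, by rw [hβ]; push_cast; ring⟩
  have hβ0 : β ≠ 0 := by rintro rfl; simp at hcos
  have hc : 6 * π * (2 * (n : ℝ) - 1) = 12 * β := by rw [hβ]; ring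
  refine ⟨?_, integral_cos_mul_mul_iteratedDeriv_two_cos_mul hβ0 hcos, ?_⟩
  · rw [hc]
    exact integral_cos_mul_mul_three_mul_deriv_cos_mul_mul_sin_two_mul_div hβ0 hcos
  · nlinarith [sq_pos_of_ne_zero hβ0]

/-- The Lyapunov–Schmidt coefficients at the bifurcation point `ν* = 1/β²`,
`β = (2n-1)π/2`, of the steady Kuramoto–Sivashinsky equation with Dirichlet
boundary conditions. With kernel function `e(x) = cos(βx)` and second-order
term `w(x) = sin(2βx)/(6π(2n-1))`:
(i) `g_yyy = ⟨e, 3(e·w)'⟩ = 1/8`, (ii) `g_yν = ⟨e, e''⟩ = -β²`, and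
`g_yyy · g_yν = -β²/8 < 0`, so the pitchfork bifurcation at
`ν* = 4/((2n-1)²π²)` is supercritical. -/
theorem lyapunov_schmidt_coefficients_supercritical (n : ℕ) (hn : 1 ≤ n) (β : ℝ)
    (hβ : β = (2 * (n : ℝ) - 1) * Real.pi / 2) :
    (∫ x in (-1 : ℝ)..1,
        Real.cos (β * x) *
          (3 * deriv (fun y => Real.cos (β * y) *
            (Real.sin (2 * β * y) / (6 * Real.pi * (2 * (n : ℝ) - 1)))) x))
      = 1 / 8 ∧
    (∫ x in (-1 : ℝ)..1,
        Real.cos (β * x) * iteratedDeriv 2 (fun y => Real.cos (β * y)) x)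
      = -β ^ 2 ∧
    (1 / 8 : ℝ) * (-β ^ 2) < 0 :=
  lyapunov_schmidt_coefficients_supercritical_general n β hβ
end
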